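/- arXiv:2502.04952 — 4 statements merged into one kernel-verified Lean document; each statement's English description precedes it below -/
import Mathlib

section
/- Let V be a type, r : V → V → Prop, and S, T sets of vertices. For every pair of vertices u, v, the following are equivalent: (1) the two-element list [u, v] is an infix of some nonempty r-chain whose first element lies in S and whose last element lies in T; (2) r u v holds, there exists s ∈ S with s →* u, and there exists t ∈ T with v →* t. -/
namespace List

variable {α : Type*} {r : α → α → Prop} {l : List α}

theorem IsChain.reflTransGen_head_of_mem (h : l.IsChain r) (hl : l ≠ []) {x : α} (hx : x ∈ l) :
    Relation.ReflTransGen r (l.head hl) x :=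
  h.induction _ l (fun _ _ hxy hx => hx.tail hxy) (fun _ => .refl) x hx

theorem IsChain.reflTransGen_getLast_of_mem (h : l.IsChain r) (hl : l ≠ []) {x : α} (hx : x ∈ l) :
    Relation.ReflTransGen r x (l.getLast hl) :=
  h.backwards_induction (Relation.ReflTransGen r · (l.getLast hl)) l
    (fun _ _ hxy hy => hy.head hxy) (fun _ => .refl) x hx

theorem infix_append_cons_of_mem_getLast? {l₁ l₂ : List α} {u v : α} (hu : u ∈ l₁.getLast?) :
    [u, v] <:+: l₁ ++ v :: l₂ :=
  ⟨l₁.dropLast, l₂, by simpa using congrArg (· ++ v :: l₂) (dropLast_append_getLast? u hu)⟩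

end List

open List in
/-- The edge `[u, v]` lies on some source-sink chain iff `r u v` holds,
`u` is reachable from a source, and `v` reaches a sink. -/
theorem edge_infix_sourceSinkChain_iff {V : Type*} (r : V → V → Prop)
    (S T : Set V) (u v : V) :
    (∃ (l : List V) (hl : l ≠ []),
        List.Chain' r l ∧ l.head hl ∈ S ∧ l.getLast hl ∈ T ∧
        List.IsInfix [u, v] l) ↔
    (r u v ∧ (∃ s ∈ S, Relation.ReflTransGen r s u) ∧
     (∃ t ∈ T, Relation.ReflTransGen r v t)) := by
  constructor
  · rintro ⟨l, hl, hc, hS, hT, huv⟩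
    have hu : u ∈ l := huv.subset mem_cons_self
    have hv : v ∈ l := huv.subset (mem_cons_of_mem _ mem_cons_self)
    exact ⟨isChain_pair.mp (hc.infix huv), ⟨_, hS, hc.reflTransGen_head_of_mem hl hu⟩,
      ⟨_, hT, hc.reflTransGen_getLast_of_mem hl hv⟩⟩
  · rintro ⟨huv, ⟨s, hs, hsu⟩, ⟨t, ht, hvt⟩⟩
    obtain ⟨p, hp, hpu⟩ := exists_isChain_cons_of_relationReflTransGen hsu
    obtain ⟨q, hq, hqt⟩ := exists_isChain_cons_of_relationReflTransGen hvt
    have hlast : u ∈ (s :: p).getLast? := hpu ▸ getLast_mem_getLast? (cons_ne_nil s p)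
    refine ⟨(s :: p) ++ v :: q, by simp, hp.append hq ?_, hs, ?_,
      infix_append_cons_of_mem_getLast? hlast⟩
    · simpa [Option.mem_def.mp hlast] using huv
    · rwa [getLast_append_of_ne_nil _ (cons_ne_nil _ _), hqt]
end

section
/- Let V be a type, r : V → V → Prop, and S, T sets of vertices; let V^N = {v | (∃ s ∈ S, s →* v) ∧ (∃ t ∈ T, v →* t)}. Let π be a nonempty list of vertices such that neither its first element nor its last element is in V^N. Then π is not an infix of any source-sink chain, and consequently the set of source-sink chains is unchanged by discarding π: the set of nonempty r-chains with first element in S and last element in T equals the set of such chains that do not contain π as an infix. -/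
/-- A list is a source-sink chain for `r`, `S`, `T` if it is a nonempty
`r`-chain whose first element lies in `S` and whose last element lies in `T`. -/
def IsSourceSinkChain {V : Type*} (r : V → V → Prop) (S T : Set V)
    (l : List V) : Prop :=
  ∃ hl : l ≠ [], List.Chain' r l ∧ l.head hl ∈ S ∧ l.getLast hl ∈ T

namespace List

variable {α : Type*} {r : α → α → Prop} {l : List α}

theorem IsChain.reflTransGen_head_of_mem_s6 (hl : IsChain r l) (hne : l ≠ []) {a : α}
    (ha : a ∈ l) : Relation.ReflTransGen r (l.head hne) a :=
  hl.induction _ l (fun _ _ hxy hx => hx.tail hxy) (fun _ => .refl) a ha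

theorem IsChain.reflTransGen_getLast_of_mem_s6 (hl : IsChain r l) (hne : l ≠ []) {a : α}
    (ha : a ∈ l) : Relation.ReflTransGen r a (l.getLast hne) :=
  hl.backwards_induction (Relation.ReflTransGen r · (l.getLast hne)) l
    (fun _ _ hxy hy => hy.head hxy) (fun _ => .refl) a ha

end List

/-- The set `V^N` of the paper. -/
def necessaryVertices {V : Type*} (r : V → V → Prop) (S T : Set V) : Set V :=
  {v | (∃ s ∈ S, Relation.ReflTransGen r s v) ∧ (∃ t ∈ T, Relation.ReflTransGen r v t)}

theorem IsSourceSinkChain.mem_necessaryVertices {V : Type*} {r : V → V → Prop} {S T : Set V}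
    {l : List V} (hl : IsSourceSinkChain r S T l) {v : V} (hv : v ∈ l) :
    v ∈ necessaryVertices r S T := by
  obtain ⟨hne, hchain, hS, hT⟩ := hl
  exact ⟨⟨_, hS, hchain.reflTransGen_head_of_mem_s6 hne hv⟩,
    ⟨_, hT, hchain.reflTransGen_getLast_of_mem_s6 hne hv⟩⟩

theorem discard_noncontributing_summary_sound_general {V : Type*} (r : V → V → Prop)
    (S T : Set V) (VN : Set V)
    (hVN : VN = {v | (∃ s ∈ S, Relation.ReflTransGen r s v) ∧
                     (∃ t ∈ T, Relation.ReflTransGen r v t)})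
    (π : List V) (hπ : π ≠ [])
    (hhead : π.head hπ ∉ VN) :
    (¬ ∃ l : List V, IsSourceSinkChain r S T l ∧ List.IsInfix π l) ∧
    ({l : List V | IsSourceSinkChain r S T l} =
      {l : List V | IsSourceSinkChain r S T l ∧ ¬ List.IsInfix π l}) := by
  have not_infix : ¬ ∃ l : List V, IsSourceSinkChain r S T l ∧ List.IsInfix π l := by
    rintro ⟨l, hl, hinf⟩
    exact hhead (hVN ▸ hl.mem_necessaryVertices (hinf.subset (List.head_mem hπ)))
  refine ⟨not_infix, Set.ext fun l => ?_⟩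
  exact ⟨fun hl => ⟨hl, fun hinf => not_infix ⟨l, hl, hinf⟩⟩, And.left⟩

/-- Path-contribution part of the soundness theorem: a nonempty list both of
whose endpoints lie outside `V^N` is an infix of no source-sink chain, and
discarding it leaves the set of source-sink chains unchanged. -/
theorem discard_noncontributing_summary_sound {V : Type*} (r : V → V → Prop)
    (S T : Set V) (VN : Set V)
    (hVN : VN = {v | (∃ s ∈ S, Relation.ReflTransGen r s v) ∧
                     (∃ t ∈ T, Relation.ReflTransGen r v t)})
    (π : List V) (hπ : π ≠ [])
    (hhead : π.head hπ ∉ VN) (hlast : π.getLast hπ ∉ VN) :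
    (¬ ∃ l : List V, IsSourceSinkChain r S T l ∧ List.IsInfix π l) ∧
    ({l : List V | IsSourceSinkChain r S T l} =
      {l : List V | IsSourceSinkChain r S T l ∧ ¬ List.IsInfix π l}) :=
  discard_noncontributing_summary_sound_general r S T VN hVN π hπ hhead
end

section
/- Let V and Γ be types, r : V → V → Prop, lab : V → V → Option Γ an edge labeling, and S, T sets of vertices. Define the set of necessary guards G = {g : Γ | ∃ u v, r u v ∧ lab u v = some g ∧ (∃ s ∈ S, s →* u) ∧ (∃ t ∈ T, v →* t)}, and define V^N = {v | (∃ s ∈ S, s →* v) ∧ (∃ t ∈ T, v →* t)} ∪ {v | ∃ g ∈ G, ∃ u w, r u w ∧ lab u w = some g ∧ v →* u}. If π is a nonempty list of vertices such that neither its first element nor its last element lies in V^N, then: (i) π is not an infix of any nonempty r-chain with first element in S and last element in T, and (ii) there is no g ∈ G and edge (u,w) with r u w and lab u w = some g such that both the first and the last element of π reach u. -/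
namespace List.IsChain

variable {V : Type*} {r : V → V → Prop} {l : List V} {v : V}

theorem reflTransGen_head_of_mem_s7 (hc : IsChain r l) (hne : l ≠ []) (hv : v ∈ l) :
    Relation.ReflTransGen r (l.head hne) v :=
  hc.induction (Relation.ReflTransGen r (l.head hne) ·) l
    (fun _ _ hxy hx => hx.tail hxy) (fun _ => .refl) v hv

theorem reflTransGen_getLast_of_mem_s7 (hc : IsChain r l) (hne : l ≠ []) (hv : v ∈ l) :
    Relation.ReflTransGen r v (l.getLast hne) :=
  hc.backwards_induction (Relation.ReflTransGen r · (l.getLast hne)) l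
    (fun _ _ hxy hy => hy.head hxy) (fun _ => .refl) v hv

end List.IsChain

theorem soundness_no_path_no_condition_contribution_general
    {V Γ : Type*} (r : V → V → Prop) (lab : V → V → Option Γ)
    (S T : Set V) (G : Set Γ)
    (VN : Set V)
    (hVN : VN = {v | (∃ s ∈ S, Relation.ReflTransGen r s v) ∧
                     (∃ t ∈ T, Relation.ReflTransGen r v t)} ∪
                {v | ∃ g ∈ G, ∃ u w, r u w ∧ lab u w = some g ∧
                     Relation.ReflTransGen r v u})
    (π : List V) (hπ : π ≠ [])
    (hhead : π.head hπ ∉ VN) :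
    (¬ ∃ (l : List V) (hl : l ≠ []),
        List.Chain' r l ∧ l.head hl ∈ S ∧ l.getLast hl ∈ T ∧
        List.IsInfix π l) ∧
    (¬ ∃ g ∈ G, ∃ u w, r u w ∧ lab u w = some g ∧
        Relation.ReflTransGen r (π.head hπ) u ∧
        Relation.ReflTransGen r (π.getLast hπ) u) := by
  subst hVN
  refine ⟨?_, ?_⟩
  · rintro ⟨l, hl, hc, hS, hT, hinf⟩
    have hmem : π.head hπ ∈ l := hinf.subset (List.head_mem hπ)
    exact hhead (Or.inl ⟨⟨_, hS, hc.reflTransGen_head_of_mem_s7 hl hmem⟩,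
      ⟨_, hT, hc.reflTransGen_getLast_of_mem_s7 hl hmem⟩⟩)
  · rintro ⟨g, hg, u, w, hr, hlab, hreach, -⟩
    exact hhead (Or.inr ⟨g, hg, u, w, hr, hlab, hreach⟩)

/-- Full soundness theorem: a nonempty list both of whose endpoints lie
outside the combined necessary-vertex set has neither path contribution
(it is an infix of no source-sink chain) nor condition contribution
(it instantiates no necessary guard). -/
theorem soundness_no_path_no_condition_contribution
    {V Γ : Type*} (r : V → V → Prop) (lab : V → V → Option Γ)
    (S T : Set V) (G : Set Γ)
    (hG : G = {g : Γ | ∃ u v, r u v ∧ lab u v = some g ∧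
                 (∃ s ∈ S, Relation.ReflTransGen r s u) ∧
                 (∃ t ∈ T, Relation.ReflTransGen r v t)})
    (VN : Set V)
    (hVN : VN = {v | (∃ s ∈ S, Relation.ReflTransGen r s v) ∧
                     (∃ t ∈ T, Relation.ReflTransGen r v t)} ∪
                {v | ∃ g ∈ G, ∃ u w, r u w ∧ lab u w = some g ∧
                     Relation.ReflTransGen r v u})
    (π : List V) (hπ : π ≠ [])
    (hhead : π.head hπ ∉ VN) (hlast : π.getLast hπ ∉ VN) :
    (¬ ∃ (l : List V) (hl : l ≠ []),
        List.Chain' r l ∧ l.head hl ∈ S ∧ l.getLast hl ∈ T ∧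
        List.IsInfix π l) ∧
    (¬ ∃ g ∈ G, ∃ u w, r u w ∧ lab u w = some g ∧
        Relation.ReflTransGen r (π.head hπ) u ∧
        Relation.ReflTransGen r (π.getLast hπ) u) :=
  soundness_no_path_no_condition_contribution_general r lab S T G VN hVN π hπ hhead
end

section
/- Let V be a type, r : V → V → Prop, and S, T sets of vertices; let V^N = {v | (∃ s ∈ S, s →* v) ∧ (∃ t ∈ T, v →* t)}, and define the restricted edge relation r' by r' u v ↔ (r u v ∧ u ∈ V^N ∧ v ∈ V^N). Then for every s ∈ S and t ∈ T: Relation.ReflTransGen r s t holds if and only if Relation.ReflTransGen r' s t holds. -/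
/-!
Every vertex on an `r`-path from a source to a sink is reachable from that source and reaches
that sink, so it is necessary; hence each edge of such a path survives the pruning.
-/

open Relation

namespace Relation.ReflTransGen

variable {α : Type*} {r : α → α → Prop}

theorem restrict_of_forall_between {N : Set α} {a b : α}
    (hN : ∀ c, ReflTransGen r a c → ReflTransGen r c b → c ∈ N) (h : ReflTransGen r a b) :
    ReflTransGen (fun u v => r u v ∧ u ∈ N ∧ v ∈ N) a b := by
  induction h using head_induction_on with
  | refl => exact refl
  | @head a a' haa' ha'b ih =>
    have ha : a ∈ N := hN a refl (head haa' ha'b)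
    have ha' : a' ∈ N := hN a' (single haa') ha'b
    exact head ⟨haa', ha, ha'⟩ (ih fun c ha'c hcb => hN c (head haa' ha'c) hcb)

end Relation.ReflTransGen

/-- Pruning the graph to edges between necessary vertices preserves exactly
the source-to-sink reachability relation. -/
theorem prune_preserves_source_sink_reachability {V : Type*}
    (r : V → V → Prop) (S T : Set V) (VN : Set V)
    (hVN : VN = {v | (∃ s ∈ S, Relation.ReflTransGen r s v) ∧
                     (∃ t ∈ T, Relation.ReflTransGen r v t)})
    (r' : V → V → Prop)
    (hr' : ∀ u v, r' u v ↔ (r u v ∧ u ∈ VN ∧ v ∈ VN)) :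
    ∀ s ∈ S, ∀ t ∈ T,
      (Relation.ReflTransGen r s t ↔ Relation.ReflTransGen r' s t) := by
  obtain rfl : r' = fun u v => r u v ∧ u ∈ VN ∧ v ∈ VN := funext₂ fun u v => propext (hr' u v)
  intro s hs t ht
  refine ⟨ReflTransGen.restrict_of_forall_between fun c hsc hct => ?_,
    ReflTransGen.mono (fun _ _ huv => huv.1) _ _⟩
  rw [hVN]
  exact ⟨⟨s, hs, hsc⟩, t, ht, hct⟩
end
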